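/- arXiv:2105.11365 — 3 statements merged into one kernel-verified Lean document; each statement's English description precedes it below -/
import Mathlib

section
/- For all positive integers n and k with k ≤ n, Σ_{j=k}^{n} j·s(n,j)·S(j,k) = (n!/(k-1)!)·Σ_{i=1}^{n-k+1} (1/i)·C(n-i, k-1). -/
/-- Unsigned Stirling numbers of the first kind. -/
def stirling1 : ℕ → ℕ → ℕ
  | 0, 0 => 1
  | 0, _ + 1 => 0
  | _ + 1, 0 => 0
  | n + 1, k + 1 => stirling1 n k + n * stirling1 n (k + 1)

/-- Stirling numbers of the second kind. -/
def stirling2 : ℕ → ℕ → ℕ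
  | 0, 0 => 1
  | 0, _ + 1 => 0
  | _ + 1, 0 => 0
  | n + 1, k + 1 => stirling2 n k + (k + 1) * stirling2 n (k + 1)

/-!
Put `L(n,k) = ∑ⱼ s(n,j) S(j,k)` (the Lah numbers) and `A(n,k) = ∑ⱼ j s(n,j) S(j,k)`. Splitting
both Stirling recurrences gives, for any weight `w`, a recurrence for `∑ⱼ w j s(n,j) S(j,k)` in
terms of the shifted weight `j ↦ w (j + 1)`. For `w = 1` it yields
`L(n+1,k+1) = (n+1)!/(k+1)! C(n,k)`; for `w j = j` the shifted weight is `j + 1`, so `A` satisfies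
a recurrence driven by `L`. Writing the right-hand side as `(n!/t!) R(n,t)` with
`R(n,t) = ∑_{m<n} C(m,t)/(n-m)` (substitute `i = n - m`), `R` obeys the matching recurrence,
which reduces termwise to `(t+1) C(m,t+1) = (m-t) C(m,t)` plus the hockey-stick identity.
-/

open Finset Nat

theorem stirling1_eq_stirlingFirst : stirling1 = stirlingFirst := by
  funext n k
  induction n generalizing k with
  | zero => cases k <;> rfl
  | succ n ih => cases k <;> simp [stirling1, stirlingFirst_succ_succ, ih, add_comm]

theorem stirling2_eq_stirlingSecond : stirling2 = stirlingSecond := by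
  funext n k
  induction n generalizing k with
  | zero => cases k <;> rfl
  | succ n ih => cases k <;> simp [stirling2, stirlingSecond_succ_succ, ih, add_comm]

theorem Nat.sum_range_choose_eq_choose_succ (n t : ℕ) :
    ∑ m ∈ range n, m.choose t = n.choose (t + 1) := by
  induction n with
  | zero => simp
  | succ n ih => rw [sum_range_succ, ih, choose_succ_succ', add_comm]

theorem Nat.cast_succ_mul_choose_succ {R : Type*} [CommRing R] (m t : ℕ) :
    ((t : R) + 1) * m.choose (t + 1) = ((m : R) - t) * m.choose t := by
  rcases le_or_gt t m with htm | hmt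
  · have h := congrArg (Nat.cast : ℕ → R) (choose_succ_right_eq m t)
    push_cast [Nat.cast_sub htm] at h
    linear_combination h
  · simp [choose_eq_zero_of_lt hmt, choose_eq_zero_of_lt (hmt.trans (lt_succ_self t))]

section weightedLah

variable {R : Type*} [CommSemiring R]

def weightedLah (w : ℕ → R) (n k : ℕ) : R :=
  ∑ j ∈ range (n + 1), w j * stirlingFirst n j * stirlingSecond j k

theorem weightedLah_eq_sum_Icc (w : ℕ → R) (n k : ℕ) :
    weightedLah w n k = ∑ j ∈ Icc k n, w j * stirlingFirst n j * stirlingSecond j k := by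
  refine (sum_subset (fun j hj => ?_) fun j _ hj => ?_).symm
  · simp only [mem_Icc, mem_range] at hj ⊢; omega
  · have hjk : j < k := by simp only [mem_Icc, mem_range] at *; omega
    simp [stirlingSecond_eq_zero_of_lt hjk]

theorem weightedLah_succ_zero (w : ℕ → R) (n : ℕ) : weightedLah w (n + 1) 0 = 0 := by
  refine sum_eq_zero fun j _ => ?_
  cases j <;> simp

theorem weightedLah_add (v w : ℕ → R) (n k : ℕ) :
    weightedLah (v + w) n k = weightedLah v n k + weightedLah w n k := by
  simp only [weightedLah, Pi.add_apply, add_mul, sum_add_distrib]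

theorem weightedLah_succ_succ (w : ℕ → R) (n k : ℕ) :
    weightedLah w (n + 1) (k + 1) =
      weightedLah (fun j => w (j + 1)) n k + (k + 1) * weightedLah (fun j => w (j + 1)) n (k + 1)
        + n * weightedLah w n (k + 1) := by
  have hshift : weightedLah w n (k + 1) =
      ∑ j ∈ range (n + 1),
        w (j + 1) * stirlingFirst n (j + 1) * stirlingSecond (j + 1) (k + 1) := by
    rw [weightedLah, sum_range_succ', sum_range_succ _ n]
    simp [stirlingFirst_eq_zero_of_lt (lt_succ_self n)]
  rw [weightedLah, sum_range_succ', hshift]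
  simp only [weightedLah, mul_sum, ← sum_add_distrib, stirlingFirst_succ_zero,
    Nat.cast_zero, mul_zero, zero_mul, add_zero]
  refine Finset.sum_congr rfl fun j _ => ?_
  rw [stirlingFirst_succ_succ, stirlingSecond_succ_succ]
  push_cast
  ring

end weightedLah

theorem weightedLah_one_succ_succ (n k : ℕ) :
    weightedLah (fun _ => (1 : ℚ)) (n + 1) (k + 1) = (n + 1)! / (k + 1)! * n.choose k := by
  induction n generalizing k with
  | zero =>
    cases k <;> simp [weightedLah, sum_range_succ, stirlingFirst_self, stirlingSecond_succ_succ]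
  | succ n ih =>
    rw [weightedLah_succ_succ]
    rcases k with _ | k
    · rw [weightedLah_succ_zero, ih 0, factorial_succ (n + 1), zero_add, factorial_one,
        choose_zero_right, choose_zero_right]
      push_cast
      ring
    · rw [ih k, ih (k + 1), choose_succ_succ' n, factorial_succ (n + 1), factorial_succ (k + 1)]
      push_cast
      field_simp
      linear_combination Nat.cast_succ_mul_choose_succ (R := ℚ) n k

def harmonicChoose (n t : ℕ) : ℚ := ∑ m ∈ range n, (m.choose t : ℚ) / (n - m)

theorem harmonicChoose_succ_zero (n : ℕ) :
    harmonicChoose (n + 1) 0 = harmonicChoose n 0 + 1 / (n + 1) := by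
  simp [harmonicChoose, sum_range_succ']

theorem harmonicChoose_succ_succ (n t : ℕ) :
    (n + 1) * harmonicChoose (n + 1) (t + 1) =
      (t + 1) * harmonicChoose n t + (n + t + 2) * harmonicChoose n (t + 1) + n.choose (t + 1) := by
  have hterm : ∀ m ∈ range n, ((n : ℚ) + 1) * ((m + 1).choose (t + 1) / (n - m)) =
      (t + 1) * (m.choose t / (n - m)) + (n + t + 2) * (m.choose (t + 1) / (n - m)) +
        m.choose t := by
    intro m hm
    have hpos : (n : ℚ) - m ≠ 0 := sub_ne_zero.2 (by exact_mod_cast (mem_range.1 hm).ne')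
    rw [choose_succ_succ']
    push_cast
    field_simp
    linear_combination -Nat.cast_succ_mul_choose_succ (R := ℚ) m t
  rw [harmonicChoose, sum_range_succ']
  push_cast
  simp only [add_sub_add_right_eq_sub]
  rw [mul_add, mul_sum, sum_congr rfl hterm]
  simp [sum_add_distrib, ← mul_sum, harmonicChoose, ← Nat.sum_range_choose_eq_choose_succ]

theorem harmonicChoose_eq_sum_Icc (n t : ℕ) :
    harmonicChoose n t = ∑ i ∈ Icc 1 (n - t), 1 / (i : ℚ) * (n - i).choose t := by
  have hzero : ∀ m ∈ range n, m ∉ Ico t n → (m.choose t : ℚ) / (n - m) = 0 := by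
    intro m hm hmt
    rw [choose_eq_zero_of_lt (by simp_all), Nat.cast_zero, zero_div]
  rw [harmonicChoose, ← sum_subset (fun m hm => by simp_all) hzero]
  refine sum_nbij' (n - ·) (n - ·) ?_ ?_ ?_ ?_ fun m hm => ?_
  · intro m hm; simp only [mem_Ico, mem_Icc] at hm ⊢; omega
  · intro i hi; simp only [mem_Ico, mem_Icc] at hi ⊢; omega
  · intro m hm; simp only [mem_Ico] at hm; omega
  · intro i hi; simp only [mem_Icc] at hi; omega
  · have hmn : m ≤ n := (mem_Ico.1 hm).2.le
    rw [Nat.sub_sub_self hmn, Nat.cast_sub hmn, div_eq_inv_mul, one_div]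

theorem weightedLah_natCast_succ_succ (n t : ℕ) :
    weightedLah (fun j => (j : ℚ)) (n + 1) (t + 1) =
      (n + 1)! / t ! * harmonicChoose (n + 1) t := by
  have hshift : (fun j : ℕ => ((j + 1 : ℕ) : ℚ)) = (fun j : ℕ => (j : ℚ)) + fun _ => 1 := by
    funext j
    simp
  induction n generalizing t with
  | zero =>
    cases t <;> simp [weightedLah, harmonicChoose, sum_range_succ, stirlingFirst_self,
      stirlingSecond_succ_succ]
  | succ n ih =>
    rw [weightedLah_succ_succ, hshift, weightedLah_add, weightedLah_add]
    rcases t with _ | s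
    · rw [weightedLah_succ_zero, weightedLah_succ_zero, ih 0, weightedLah_one_succ_succ n 0,
        harmonicChoose_succ_zero (n + 1), factorial_succ (n + 1), choose_zero_right]
      push_cast
      field_simp
      ring
    · have hR := harmonicChoose_succ_succ (n + 1) s
      rw [choose_succ_succ' n] at hR
      rw [ih s, ih (s + 1), weightedLah_one_succ_succ n s, weightedLah_one_succ_succ n (s + 1),
        factorial_succ (n + 1), factorial_succ (s + 1), factorial_succ s]
      push_cast at hR ⊢
      field_simp
      linear_combination -hR

open scoped BigOperators
theorem stmt_4 (n k : ℕ) (hk : 1 ≤ k) (hkn : k ≤ n) :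
    (∑ j ∈ Finset.Icc k n, (j : ℚ) * (stirling1 n j : ℚ) * (stirling2 j k : ℚ)) =
      (n.factorial : ℚ) / ((k - 1).factorial : ℚ) *
        ∑ i ∈ Finset.Icc 1 (n - k + 1), (1 / (i : ℚ)) * ((n - i).choose (k - 1) : ℚ) := by
  obtain ⟨t, rfl⟩ : ∃ t, k = t + 1 := ⟨k - 1, by omega⟩
  obtain ⟨m, rfl⟩ : ∃ m, n = m + 1 := ⟨n - 1, by omega⟩
  rw [stirling1_eq_stirlingFirst, stirling2_eq_stirlingSecond,
    ← weightedLah_eq_sum_Icc (fun j : ℕ => (j : ℚ)), weightedLah_natCast_succ_succ,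
    harmonicChoose_eq_sum_Icc, add_tsub_cancel_right, show m + 1 - (t + 1) + 1 = m + 1 - t by omega]
end

section
/- For all positive integers n, k, p with k ≤ n, Σ_{j=k}^{n} s(n,j)·S(j,k)·C(j,p) = n!·Σ_{i=1}^{n-k+1} C(n-i,k-1)·Σ_{m=1}^{min(k,p)} (S(p,m)/(k-m)!)·(s(i+m-1,p)/(i+m-1)!). -/
/-!
Splitting a partition of `p + u` elements according to its restriction to the first `p` gives
`S(j, k) C(j, p) = ∑ₘ S(p, m) C(j, p) S_m(m + j - p, k)` with `r`-Stirling numbers `S_m`.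
For fixed `m`, both `(k - m)! ∑ⱼ s(n, j) C(j, p) S_m(m + j - p, k)` and `n!` times the `n`-th
coefficient of `X^(k - m) (1 - X)^(-k) · (-log (1 - X))^p / p!` satisfy the same recurrence in
`n`: on the left it comes from the recurrences of `s` and `S_m`, on the right from the
differential equations `(1 - X) F' = …` satisfied by the two factors. That coefficient is the
inner sum over `i` of the right-hand side.
-/

open Finset PowerSeries
open scoped Nat

theorem stirling1_eq_stirlingFirst_s6 : ∀ n k, stirling1 n k = Nat.stirlingFirst n k
  | 0, 0 | 0, _ + 1 | _ + 1, 0 => rfl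
  | n + 1, k + 1 => by
    rw [stirling1, Nat.stirlingFirst_succ_succ, stirling1_eq_stirlingFirst_s6 n k,
      stirling1_eq_stirlingFirst_s6 n (k + 1), add_comm]

theorem stirling2_eq_stirlingSecond_s6 : ∀ n k, stirling2 n k = Nat.stirlingSecond n k
  | 0, 0 | 0, _ + 1 | _ + 1, 0 => rfl
  | n + 1, k + 1 => by
    rw [stirling2, Nat.stirlingSecond_succ_succ, stirling2_eq_stirlingSecond_s6 n k,
      stirling2_eq_stirlingSecond_s6 n (k + 1), add_comm]

/-- `rStirlingSecond r t k` is the `r`-Stirling number `S_r(r + t, k)`: the number of partitions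
of `r + t` elements into `k` blocks with the first `r` elements in distinct blocks. -/
def rStirlingSecond : ℕ → ℕ → ℕ → ℕ
  | r, 0, k => if r = k then 1 else 0
  | r, t + 1, k => r * rStirlingSecond r t k + rStirlingSecond (r + 1) t k

theorem rStirlingSecond_eq_zero_of_lt {r k : ℕ} (h : k < r) : ∀ t, rStirlingSecond r t k = 0
  | 0 => if_neg h.ne'
  | t + 1 => by
    rw [rStirlingSecond, rStirlingSecond_eq_zero_of_lt h t,
      rStirlingSecond_eq_zero_of_lt (h.trans r.lt_succ_self) t, mul_zero]

theorem stirlingSecond_add (p u k : ℕ) :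
    Nat.stirlingSecond (p + u) k =
      ∑ m ∈ range (p + 1), Nat.stirlingSecond p m * rStirlingSecond m u k := by
  induction u generalizing p with
  | zero =>
    simp only [add_zero, rStirlingSecond, mul_ite, mul_one, mul_zero, sum_ite_eq', mem_range]
    split_ifs with h
    · rfl
    · exact Nat.stirlingSecond_eq_zero_of_lt (by omega)
  | succ u ih =>
    have shift : ∑ m ∈ range (p + 1),
        (m + 1) * Nat.stirlingSecond p (m + 1) * rStirlingSecond (m + 1) u k =
          ∑ m ∈ range (p + 1), m * Nat.stirlingSecond p m * rStirlingSecond m u k := by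
      rw [sum_range_succ, Nat.stirlingSecond_eq_zero_of_lt p.lt_succ_self, sum_range_succ']
      simp
    rw [← add_assoc, add_right_comm, ih, sum_range_succ', Nat.stirlingSecond_succ_zero, zero_mul,
      add_zero]
    simp only [Nat.stirlingSecond_succ_succ, add_mul (_ * _), sum_add_distrib]
    rw [shift, ← sum_add_distrib]
    refine sum_congr rfl fun m _ => ?_
    rw [rStirlingSecond]
    ring

def stirlingFirstTransform (f : ℕ → ℕ) (n : ℕ) : ℕ :=
  ∑ j ∈ range (n + 1), Nat.stirlingFirst n j * f j

theorem stirlingFirstTransform_succ (f : ℕ → ℕ) (n : ℕ) :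
    stirlingFirstTransform f (n + 1) =
      n * stirlingFirstTransform f n + stirlingFirstTransform (fun j => f (j + 1)) n := by
  have shift : n * ∑ j ∈ range (n + 1), Nat.stirlingFirst n (j + 1) * f (j + 1) =
      n * stirlingFirstTransform f n := by
    rcases n with _ | n
    · simp
    · congr 1
      rw [stirlingFirstTransform, sum_range_succ' (fun j => Nat.stirlingFirst (n + 1) j * f j),
        sum_range_succ, Nat.stirlingFirst_eq_zero_of_lt (n + 1).lt_succ_self,
        Nat.stirlingFirst_succ_zero]
      simp
  rw [stirlingFirstTransform, sum_range_succ', Nat.stirlingFirst_succ_zero, zero_mul, add_zero]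
  simp only [Nat.stirlingFirst_succ_succ, add_mul, sum_add_distrib, mul_assoc, ← mul_sum, shift]
  rfl

def chooseRStirling (k m p j : ℕ) : ℕ :=
  j.choose p * rStirlingSecond m (j - p) k

theorem chooseRStirling_zero_succ (k m j : ℕ) :
    chooseRStirling k m 0 (j + 1) =
      m * chooseRStirling k m 0 j + chooseRStirling k (m + 1) 0 j := by
  simp [chooseRStirling, rStirlingSecond]

theorem chooseRStirling_succ_succ (k m p j : ℕ) :
    chooseRStirling k m (p + 1) (j + 1) = m * chooseRStirling k m (p + 1) j +
      chooseRStirling k (m + 1) (p + 1) j + chooseRStirling k m p j := by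
  simp only [chooseRStirling, Nat.choose_succ_succ, Nat.add_sub_add_right]
  rcases lt_or_ge j (p + 1) with hj | hj
  · simp [Nat.choose_eq_zero_of_lt hj]
  · obtain ⟨t, rfl⟩ := Nat.exists_eq_add_of_le hj
    rw [show p + 1 + t - p = t + 1 by omega, Nat.add_sub_cancel_left, rStirlingSecond]
    ring

theorem chooseRStirling_eq_zero_of_lt {k m : ℕ} (h : k < m) (p j : ℕ) :
    chooseRStirling k m p j = 0 := by
  rw [chooseRStirling, rStirlingSecond_eq_zero_of_lt h, mul_zero]

theorem stirlingFirstTransform_chooseRStirling_zero_succ (k m n : ℕ) :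
    stirlingFirstTransform (chooseRStirling k m 0) (n + 1) =
      (n + m) * stirlingFirstTransform (chooseRStirling k m 0) n +
        stirlingFirstTransform (chooseRStirling k (m + 1) 0) n := by
  rw [stirlingFirstTransform_succ]
  simp only [stirlingFirstTransform, chooseRStirling_zero_succ,
    mul_add, sum_add_distrib, mul_left_comm _ m, ← mul_sum]
  ring

theorem stirlingFirstTransform_chooseRStirling_succ_succ (k m p n : ℕ) :
    stirlingFirstTransform (chooseRStirling k m (p + 1)) (n + 1) =
      (n + m) * stirlingFirstTransform (chooseRStirling k m (p + 1)) n +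
        stirlingFirstTransform (chooseRStirling k (m + 1) (p + 1)) n +
          stirlingFirstTransform (chooseRStirling k m p) n := by
  rw [stirlingFirstTransform_succ]
  simp only [stirlingFirstTransform, chooseRStirling_succ_succ,
    mul_add, sum_add_distrib, mul_left_comm _ m, ← mul_sum]
  ring

theorem stirlingSecond_mul_choose (j k : ℕ) {p : ℕ} (hp : 1 ≤ p) :
    Nat.stirlingSecond j k * j.choose p =
      ∑ m ∈ Icc 1 (min k p), Nat.stirlingSecond p m * chooseRStirling k m p j := by
  rcases lt_or_ge j p with hj | hj
  · simp [chooseRStirling, Nat.choose_eq_zero_of_lt hj]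
  obtain ⟨u, rfl⟩ := Nat.exists_eq_add_of_le hj
  rw [stirlingSecond_add, sum_mul]
  symm
  refine sum_subset (fun m hm => ?_) (fun m hm hm' => ?_) |>.trans (sum_congr rfl fun m _ => ?_)
  · simp only [mem_Icc, mem_range] at hm ⊢
    omega
  · simp only [mem_Icc, mem_range, not_and_or, not_le] at hm hm'
    rcases hm' with h0 | hkm
    · obtain ⟨p, rfl⟩ := Nat.exists_eq_add_of_le' hp
      rw [Nat.lt_one_iff.mp h0, Nat.stirlingSecond_succ_zero, zero_mul]
    · rw [chooseRStirling_eq_zero_of_lt (by omega), mul_zero]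
  · rw [chooseRStirling, Nat.add_sub_cancel_left]
    ring

theorem sum_stirlingFirst_mul_stirlingSecond_mul_choose (n k : ℕ) {p : ℕ} (hp : 1 ≤ p) :
    ∑ j ∈ Icc k n, Nat.stirlingFirst n j * Nat.stirlingSecond j k * j.choose p =
      ∑ m ∈ Icc 1 (min k p),
        Nat.stirlingSecond p m * stirlingFirstTransform (chooseRStirling k m p) n := by
  rw [sum_subset (s₂ := range (n + 1))]
  · simp only [mul_assoc, stirlingSecond_mul_choose _ _ hp, mul_sum, stirlingFirstTransform]
    rw [sum_comm]
    exact sum_congr rfl fun m _ => sum_congr rfl fun j _ => by ring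
  · intro j hj
    simp only [mem_Icc, mem_range] at hj ⊢
    omega
  · intro j _ hj
    rw [Nat.stirlingSecond_eq_zero_of_lt (by simp_all), mul_zero, zero_mul]

section CommRing

variable {S : Type*} [CommRing S]

theorem coeff_one_sub_X_mul_derivative (f : S⟦X⟧) (n : ℕ) :
    coeff n ((1 - X) * d⁄dX S f) = (n + 1) * coeff (n + 1) f - n * coeff n f := by
  rw [sub_mul, one_mul, map_sub, coeff_derivative]
  rcases n with _ | n
  · simp [mul_comm]
  · rw [coeff_succ_X_mul, coeff_derivative]
    push_cast
    ring

theorem cast_choose_succ_mul (N K : ℕ) :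
    ((N + 1).choose K : S) * ((N : S) + 1 - K) = (N.choose K : S) * (N + 1) := by
  rcases le_or_gt K (N + 1) with h | h
  · have := congrArg (Nat.cast (R := S)) (Nat.choose_mul_succ_eq N K)
    push_cast [Nat.cast_sub h] at this
    exact this.symm
  · rw [Nat.choose_eq_zero_of_lt h, Nat.choose_eq_zero_of_lt (by omega)]
    simp

variable (S) in
/-- The power series `X ^ (K - r) / (1 - X) ^ (K + 1)` when `r ≤ K`. -/
noncomputable def chooseSeries (K r : ℕ) : S⟦X⟧ :=
  mk fun n => ((n + r).choose K : S)

theorem one_sub_X_mul_derivative_chooseSeries (K r : ℕ) :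
    (1 - X) * d⁄dX S (chooseSeries S K r) =
      ((r : S) + 1) • chooseSeries S K r + ((K : S) - r) • chooseSeries S K (r + 1) := by
  ext n
  simp only [coeff_one_sub_X_mul_derivative, chooseSeries, coeff_mk, map_add, coeff_smul,
    smul_eq_mul]
  have key := cast_choose_succ_mul (S := S) (n + r) K
  rw [show n + 1 + r = n + r + 1 by ring, show n + (r + 1) = n + r + 1 by ring]
  push_cast at key ⊢
  linear_combination key

end CommRing

section Field

variable {R : Type*} [Field R] [CharZero R]

variable (R) in
/-- The exponential generating function `(-log (1 - X)) ^ p / p!` of `s(·, p)`. -/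
noncomputable def stirlingFirstEGF (p : ℕ) : R⟦X⟧ :=
  mk fun q => (Nat.stirlingFirst q p : R) / q !

theorem stirlingFirstEGF_zero : stirlingFirstEGF R 0 = 1 := by
  ext (_ | q) <;> simp [stirlingFirstEGF, coeff_one]

theorem one_sub_X_mul_derivative_stirlingFirstEGF (p : ℕ) :
    (1 - X) * d⁄dX R (stirlingFirstEGF R (p + 1)) = stirlingFirstEGF R p := by
  ext n
  simp only [coeff_one_sub_X_mul_derivative, stirlingFirstEGF, coeff_mk,
    Nat.stirlingFirst_succ_succ, Nat.factorial_succ]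
  push_cast
  field_simp
  ring

theorem one_sub_X_mul_derivative_chooseSeries_mul_stirlingFirstEGF (K r p : ℕ) :
    (1 - X) * d⁄dX R (chooseSeries R K r * stirlingFirstEGF R (p + 1)) =
      ((r : R) + 1) • (chooseSeries R K r * stirlingFirstEGF R (p + 1)) +
        ((K : R) - r) • (chooseSeries R K (r + 1) * stirlingFirstEGF R (p + 1)) +
          chooseSeries R K r * stirlingFirstEGF R p := by
  rw [Derivation.leibniz, smul_eq_mul, smul_eq_mul, mul_add, mul_left_comm,
    one_sub_X_mul_derivative_stirlingFirstEGF, mul_left_comm,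
    one_sub_X_mul_derivative_chooseSeries, mul_add, mul_smul_comm, mul_smul_comm,
    mul_comm (stirlingFirstEGF R _), mul_comm (stirlingFirstEGF R _)]
  abel

theorem coeff_chooseSeries_mul_stirlingFirstEGF {K r p : ℕ} (hrK : r ≤ K) (hrp : r < p)
    (n : ℕ) : coeff n (chooseSeries R K r * stirlingFirstEGF R p) =
      ∑ i ∈ Icc 1 (n - K), ((n - i).choose K : R) * (Nat.stirlingFirst (i + r) p / (i + r)!) := by
  rw [coeff_mul]
  symm
  refine sum_bij_ne_zero (fun i _ _ => (n - i - r, i + r)) (fun i hi _ => ?_)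
    (fun i _ _ j _ _ h => by simpa using congrArg Prod.snd h) (fun b hb hne => ?_)
    (fun i hi _ => ?_)
  · simp only [HasAntidiagonal.mem_antidiagonal, mem_Icc] at hi ⊢
    omega
  · obtain ⟨a, q⟩ := b
    simp only [HasAntidiagonal.mem_antidiagonal, chooseSeries, stirlingFirstEGF, coeff_mk, ne_eq,
      mul_eq_zero, div_eq_zero_iff, Nat.cast_eq_zero, not_or] at hb hne
    have hK : K ≤ a + r := not_lt.mp fun h => hne.1 (Nat.choose_eq_zero_of_lt h)
    have hq : p ≤ q := not_lt.mp fun h => hne.2.1 (Nat.stirlingFirst_eq_zero_of_lt h)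
    have hn : n - (q - r) = a + r := by omega
    have hq' : q - r + r = q := by omega
    refine ⟨q - r, mem_Icc.mpr (by omega), ?_, ?_⟩
    · simpa [hn, hq'] using hne
    · exact Prod.ext (by dsimp only; omega) hq'
  · simp only [mem_Icc] at hi
    simp only [chooseSeries, stirlingFirstEGF, coeff_mk]
    rw [show n - i - r + r = n - i by omega]

theorem factorial_mul_stirlingFirstTransform_chooseRStirling (K n r p : ℕ) (hr : r ≤ K) :
    ((K - r)! : R) * stirlingFirstTransform (chooseRStirling (K + 1) (r + 1) p) n =
      n ! * coeff n (chooseSeries R K r * stirlingFirstEGF R p) := by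
  induction n generalizing r p with
  | zero =>
    rcases p with _ | p
    · rcases hr.lt_or_eq with hr | rfl
      · simp [stirlingFirstTransform, chooseRStirling, rStirlingSecond, stirlingFirstEGF_zero,
          chooseSeries, Nat.choose_eq_zero_of_lt hr, hr.ne]
      · simp [stirlingFirstTransform, chooseRStirling, rStirlingSecond, stirlingFirstEGF_zero,
          chooseSeries]
    · simp [stirlingFirstTransform, chooseRStirling, stirlingFirstEGF, coeff_mul]
  | succ n ih =>
    have ih_next : ∀ p, ((K - r)! : R) *
        stirlingFirstTransform (chooseRStirling (K + 1) (r + 1 + 1) p) n =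
          ((K : R) - r) * (n ! * coeff n (chooseSeries R K (r + 1) * stirlingFirstEGF R p)) := by
      intro p
      rcases hr.lt_or_eq with hr | rfl
      · rw [← ih (r + 1) p hr, show K - r = K - (r + 1) + 1 by omega, Nat.factorial_succ,
          Nat.cast_mul, Nat.cast_add_one, Nat.cast_sub hr]
        push_cast
        ring
      · have : chooseRStirling (r + 1) (r + 1 + 1) p = 0 :=
          funext (chooseRStirling_eq_zero_of_lt (by omega) p)
        simp [this, stirlingFirstTransform]
    rw [Nat.factorial_succ, Nat.cast_mul]
    rcases p with _ | p
    · have hc := congrArg (coeff n) (one_sub_X_mul_derivative_chooseSeries (S := R) K r)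
      have e1 := ih r 0 hr
      have e2 := ih_next 0
      simp only [coeff_one_sub_X_mul_derivative, map_add, coeff_smul, smul_eq_mul] at hc
      rw [stirlingFirstEGF_zero, mul_one] at e1 e2 ⊢
      rw [stirlingFirstTransform_chooseRStirling_zero_succ]
      push_cast
      linear_combination ((n : R) + r + 1) * e1 + e2 - (n ! : R) * hc
    · have hc := congrArg (coeff n)
        (one_sub_X_mul_derivative_chooseSeries_mul_stirlingFirstEGF (R := R) K r p)
      have e1 := ih r (p + 1) hr
      have e2 := ih_next (p + 1)
      have e3 := ih r p hr
      simp only [coeff_one_sub_X_mul_derivative, map_add, coeff_smul, smul_eq_mul] at hc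
      rw [stirlingFirstTransform_chooseRStirling_succ_succ]
      push_cast
      linear_combination ((n : R) + r + 1) * e1 + e2 + e3 - (n ! : R) * hc

end Field

open scoped BigOperators
theorem stmt_6 (n k p : ℕ) (hk : 1 ≤ k) (hkn : k ≤ n) (hp : 1 ≤ p) :
    (∑ j ∈ Finset.Icc k n, (stirling1 n j : ℚ) * (stirling2 j k : ℚ) * (j.choose p : ℚ)) =
      (n.factorial : ℚ) *
        ∑ i ∈ Finset.Icc 1 (n - k + 1), ((n - i).choose (k - 1) : ℚ) *
          ∑ m ∈ Finset.Icc 1 (min k p),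
            (stirling2 p m : ℚ) / ((k - m).factorial : ℚ) *
              ((stirling1 (i + m - 1) p : ℚ) / ((i + m - 1).factorial : ℚ)) := by
  obtain ⟨K, rfl⟩ : ∃ K, k = K + 1 := ⟨k - 1, by omega⟩
  have lhs := congrArg (Nat.cast (R := ℚ))
    (sum_stirlingFirst_mul_stirlingSecond_mul_choose n (K + 1) hp)
  push_cast at lhs
  rw [show n - (K + 1) + 1 = n - K by omega]
  simp only [stirling1_eq_stirlingFirst_s6, stirling2_eq_stirlingSecond_s6, lhs, mul_sum,
    Nat.add_sub_cancel]
  rw [sum_comm]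
  refine sum_congr rfl fun m hm => ?_
  obtain ⟨r, rfl⟩ : ∃ r, m = r + 1 := ⟨m - 1, by simp only [mem_Icc] at hm; omega⟩
  simp only [mem_Icc, le_min_iff] at hm
  have main := factorial_mul_stirlingFirstTransform_chooseRStirling (R := ℚ) K n r p (by omega)
  rw [coeff_chooseSeries_mul_stirlingFirstEGF (by omega) (by omega)] at main
  simp only [Nat.add_sub_add_right, Nat.add_succ_sub_one]
  have hf : ((K - r)! : ℚ) ≠ 0 := by positivity
  calc _ = (Nat.stirlingSecond p (r + 1) : ℚ) / (K - r)! *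
        ((K - r)! * stirlingFirstTransform (chooseRStirling (K + 1) (r + 1) p) n) := by
        field_simp
    _ = _ := by
      rw [main, mul_sum, mul_sum]
      exact sum_congr rfl fun i _ => by ring
end

section
/- For all positive integers p and n, (1/n!)·Σ_{j=1}^{n} s(n,j)·C(j,p) = Σ_{j=1}^{n} s(j,p)/j!, and both sides equal (1/n!)·s(n+1, p+1). -/
/-!
The numbers `s(n, ·)` are the coefficients of the rising factorial `x (x + 1) ⋯ (x + n - 1)`.
Since the rising factorial of length `n + 1` is `x` times the one of length `n` evaluated at
`x + 1`, and `(x + 1) ^ j` has coefficients `C(j, ·)`, comparing coefficients of `x ^ (p + 1)`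
gives `∑ j, s(n, j) C(j, p) = s(n + 1, p + 1)`. The recurrence
`s(n + 1, p + 1) = s(n, p) + n s(n, p + 1)` makes `s(n + 1, p + 1) / n!` telescope into
`∑ j ≤ n, s(j, p) / j!`. For `p ≥ 1` the terms with `j = 0` vanish.
-/

open Finset Polynomial

theorem sum_range_succ_eq_sum_Icc_one {M : Type*} [AddCommMonoid M] {f : ℕ → M} (h0 : f 0 = 0)
    (n : ℕ) : ∑ j ∈ range (n + 1), f j = ∑ j ∈ Icc 1 n, f j := by
  rw [Nat.range_succ_eq_Icc_zero, ← insert_Icc_add_one_left_eq_Icc n.zero_le, sum_insert (by simp),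
    h0, zero_add, zero_add]

theorem coeff_ascPochhammer_nat (n k : ℕ) : (ascPochhammer ℕ n).coeff k = stirling1 n k := by
  induction n generalizing k with
  | zero => cases k <;> simp [stirling1, coeff_one]
  | succ n ih =>
    rw [ascPochhammer_succ_right, mul_add, coeff_add, ← C_eq_natCast, coeff_mul_C]
    cases k with
    | zero => cases n <;> simp [ih, stirling1]
    | succ k => rw [coeff_mul_X, ih, ih, stirling1, Nat.cast_id, mul_comm]

theorem sum_stirling1_mul_choose (n p : ℕ) :
    ∑ j ∈ range (n + 1), stirling1 n j * j.choose p = stirling1 (n + 1) (p + 1) := by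
  have hcomp : (ascPochhammer ℕ n).comp (X + 1) =
      ∑ j ∈ range (n + 1), C (stirling1 n j) * (X + 1) ^ j := by
    rw [comp_eq_sum_left, sum_over_range' _ (fun _ => by simp) (n + 1)
      (by simp [ascPochhammer_natDegree])]
    simp only [coeff_ascPochhammer_nat]
  rw [← coeff_ascPochhammer_nat, ascPochhammer_succ_left, coeff_X_mul, hcomp, finsetSum_coeff]
  simp only [coeff_C_mul, coeff_X_add_one_pow, Nat.cast_id]

theorem stirling1_succ_succ_div_factorial (n p : ℕ) :
    (stirling1 (n + 1) (p + 1) : ℚ) / n.factorial =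
      ∑ j ∈ range (n + 1), (stirling1 j p : ℚ) / j.factorial := by
  induction n with
  | zero => simp [stirling1]
  | succ n ih =>
    rw [sum_range_succ, ← ih, stirling1, Nat.factorial_succ]
    push_cast
    field_simp
    ring

open scoped BigOperators
theorem stmt_8_general (p n : ℕ) (hp : 1 ≤ p) :
    (1 / (n.factorial : ℚ)) * (∑ j ∈ Finset.Icc 1 n, (stirling1 n j : ℚ) * (j.choose p : ℚ)) =
        ∑ j ∈ Finset.Icc 1 n, (stirling1 j p : ℚ) / (j.factorial : ℚ) ∧
      (1 / (n.factorial : ℚ)) * (∑ j ∈ Finset.Icc 1 n, (stirling1 n j : ℚ) * (j.choose p : ℚ)) =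
        (stirling1 (n + 1) (p + 1) : ℚ) / (n.factorial : ℚ) := by
  obtain ⟨q, rfl⟩ := Nat.exists_eq_add_of_le' hp
  have hchoose : ∑ j ∈ Icc 1 n, (stirling1 n j : ℚ) * (j.choose (q + 1) : ℚ) =
      stirling1 (n + 1) (q + 2) := by
    rw [← sum_range_succ_eq_sum_Icc_one (by simp), ← sum_stirling1_mul_choose]
    push_cast
    rfl
  have htelescope : (stirling1 (n + 1) (q + 2) : ℚ) / n.factorial =
      ∑ j ∈ Icc 1 n, (stirling1 j (q + 1) : ℚ) / j.factorial := by
    rw [stirling1_succ_succ_div_factorial, sum_range_succ_eq_sum_Icc_one (by simp [stirling1])]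
  rw [hchoose, one_div_mul_eq_div]
  exact ⟨htelescope, rfl⟩

theorem stmt_8 (p n : ℕ) (hp : 1 ≤ p) (hn : 1 ≤ n) :
    (1 / (n.factorial : ℚ)) * (∑ j ∈ Finset.Icc 1 n, (stirling1 n j : ℚ) * (j.choose p : ℚ)) =
        ∑ j ∈ Finset.Icc 1 n, (stirling1 j p : ℚ) / (j.factorial : ℚ) ∧
      (1 / (n.factorial : ℚ)) * (∑ j ∈ Finset.Icc 1 n, (stirling1 n j : ℚ) * (j.choose p : ℚ)) =
        (stirling1 (n + 1) (p + 1) : ℚ) / (n.factorial : ℚ) :=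
  stmt_8_general p n hp
end
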